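/- The 2-player unweighted congestion game with 4 resources, cost c_e(x) = (8/9)·x, where player 1 chooses {e_1,e_2} or {e_3,e_4}, player 2 chooses {e_1,e_4} or {e_2,e_3}, and priorities are 2≻1 on e_1, e_3 and 1≻2 on e_2, e_4, admits no (3/2 − ε)-approximate pure Nash equilibrium for any ε > 0. -/
import Mathlib


/-- Strategies: player 0 chooses {e₁,e₂}={0,1} or {e₃,e₄}={2,3};
player 1 chooses {e₁,e₄}={0,3} or {e₂,e₃}={1,2}. -/
def strat14 (i : Fin 2) (b : Bool) : Finset (Fin 4) :=
  if i = 0 then (if b then {2, 3} else {0, 1}) else (if b then {1, 2} else {0, 3})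

/-- Priorities: 2 ≻ 1 on e₁,e₃ (indices 0,2), 1 ≻ 2 on e₂,e₄ (indices 1,3). -/
def prio14 (e : Fin 4) (i : Fin 2) : ℕ :=
  if (e : ℕ) % 2 = 0 then 1 - (i : ℕ) else (i : ℕ)

/-- Cost with c_e(x) = (8/9)·x. -/
noncomputable def cost14 (s : Fin 2 → Bool) (i : Fin 2) : ℝ :=
  ∑ e ∈ strat14 i (s i), (8 / 9 : ℝ) *
    ((Finset.univ.filter (fun i' => e ∈ strat14 i' (s i') ∧ prio14 e i' ≤ prio14 e i)).card : ℝ)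

lemma costcalc (s : Fin 2 → Bool) (i : Fin 2) (n : ℕ)
    (h : (∑ e ∈ strat14 i (s i),
      (Finset.univ.filter (fun i' => e ∈ strat14 i' (s i') ∧ prio14 e i' ≤ prio14 e i)).card) = n) :
    cost14 s i = (8/9 : ℝ) * n := by
  unfold cost14
  rw [← Finset.mul_sum]
  congr 1
  rw [← h]
  push_cast
  rfl

/-- The game has no (3/2 - ε)-approximate pure Nash equilibrium for any ε > 0. -/
theorem stmt14 (ε : ℝ) (hε : 0 < ε) :
    ¬ ∃ s : Fin 2 → Bool,
      ∀ (i : Fin 2) (b : Bool),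
        cost14 s i ≤ (3 / 2 - ε) * cost14 (Function.update s i b) i := by
  rintro ⟨s, h⟩
  have hs : s = ![s 0, s 1] := funext (fun j => by fin_cases j <;> simp)
  rw [hs] at h
  rcases hb0 : s 0 <;> rcases hb1 : s 1 <;> rw [hb0, hb1] at h
  · have := h 0 true
    rw [costcalc _ _ 3 (by decide), costcalc _ _ 2 (by decide)] at this
    nlinarith
  · have := h 1 false
    rw [costcalc _ _ 3 (by decide), costcalc _ _ 2 (by decide)] at this
    nlinarith
  · have := h 1 true
    rw [costcalc _ _ 3 (by decide), costcalc _ _ 2 (by decide)] at this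
    nlinarith
  · have := h 0 false
    rw [costcalc _ _ 3 (by decide), costcalc _ _ 2 (by decide)] at this
    nlinarith
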